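/- arXiv:2101.07233 — 2 statements merged into one kernel-verified Lean document; each statement's English description precedes it below -/
import Mathlib

section
/- For every edge e of G, the unit s-t electric flow satisfies |f_e| ≤ 1. -/
/-!
Let `φ` be the potential, so that `f e = (φ (head e) - φ (tail e)) / r e`, and let `x` be the
indicator of the superlevel set of `φ` at the higher end of an edge `e₀`. Current flows from higher
to lower potential, so every edge contributes with the same sign to the net current
`x ⬝ᵥ (L *ᵥ φ) = ∑ e, (x (head e) - x (tail e)) * f e` out of that set, and `e₀` contributes
`|f e₀|`. As `L *ᵥ φ = 1_t - 1_s`, the net current is `x t - x s ≤ 1`.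
-/

open Matrix

/-- The four Penrose conditions characterizing the Moore–Penrose pseudoinverse. -/
def IsMoorePenrose {n : Type*} [Fintype n] (M Md : Matrix n n ℝ) : Prop :=
  M * Md * M = M ∧ Md * M * Md = Md ∧ (M * Md)ᵀ = M * Md ∧ (Md * M)ᵀ = Md * M

open Finset

/-- `M * Md` is the orthogonal projection onto the range of `M`, which is `(ker M)ᗮ` as `M` is
symmetric. -/
theorem IsMoorePenrose.mulVec_mulVec_eq_self {n : Type*} [Fintype n] {M Md : Matrix n n ℝ}
    (h : IsMoorePenrose M Md) (hM : Mᵀ = M) {χ : n → ℝ}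
    (hχ : ∀ z, M *ᵥ z = 0 → z ⬝ᵥ χ = 0) : M *ᵥ (Md *ᵥ χ) = χ := by
  set y := χ - M *ᵥ (Md *ᵥ χ)
  have hMMMd : M * (M * Md) = M := by
    calc M * (M * Md) = M * (M * Md)ᵀ := by rw [h.2.2.1]
      _ = (M * Md * M)ᵀ := by simp only [transpose_mul, hM, Matrix.mul_assoc]
      _ = M := by rw [h.1, hM]
  have hy : M *ᵥ y = 0 := by
    rw [mulVec_sub, mulVec_mulVec, mulVec_mulVec, Matrix.mul_assoc, hMMMd, sub_self]
  have hyy : y ⬝ᵥ y = 0 := by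
    calc y ⬝ᵥ y = y ⬝ᵥ χ - y ⬝ᵥ (M *ᵥ (Md *ᵥ χ)) := dotProduct_sub _ _ _
      _ = 0 - (M *ᵥ y) ⬝ᵥ (Md *ᵥ χ) := by
        rw [hχ y hy, dotProduct_mulVec, ← mulVec_transpose, hM]
      _ = 0 := by rw [hy, zero_dotProduct, sub_zero]
  exact (sub_eq_zero.mp (dotProduct_self_eq_zero.mp hyy)).symm

section Superlevel

variable {V : Type*}

noncomputable def superlevelIndicator (φ : V → ℝ) (c : ℝ) (v : V) : ℝ :=
  if c ≤ φ v then 1 else 0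

theorem superlevelIndicator_sub_le_one (φ : V → ℝ) (c : ℝ) (u w : V) :
    superlevelIndicator φ c u - superlevelIndicator φ c w ≤ 1 := by
  unfold superlevelIndicator
  split_ifs <;> norm_num

theorem superlevelIndicator_sub_mul_sub_nonneg (φ : V → ℝ) (c : ℝ) (u w : V) :
    0 ≤ (superlevelIndicator φ c u - superlevelIndicator φ c w) * (φ u - φ w) := by
  unfold superlevelIndicator
  split_ifs <;> nlinarith

theorem superlevelIndicator_max_sub_mul_sub (φ : V → ℝ) (u w : V) :
    (superlevelIndicator φ (max (φ u) (φ w)) u - superlevelIndicator φ (max (φ u) (φ w)) w) *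
      (φ u - φ w) = |φ u - φ w| := by
  unfold superlevelIndicator
  rcases le_total (φ u) (φ w) with h | h
  · rw [max_eq_right h, abs_of_nonpos (sub_nonpos.mpr h)]
    split_ifs <;> linarith
  · rw [max_eq_left h, abs_of_nonneg (sub_nonneg.mpr h)]
    split_ifs <;> linarith

end Superlevel

section ElectricalNetwork

variable {V E : Type*} [DecidableEq V]

def incidenceMatrix (head tail : E → V) : Matrix E V ℝ :=
  of fun e v => (if v = head e then (1 : ℝ) else 0) - if v = tail e then 1 else 0

section

variable [Fintype V]

theorem dotProduct_single_sub_single (x : V → ℝ) (u w : V) :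
    x ⬝ᵥ (fun v => (if v = u then (1 : ℝ) else 0) - if v = w then 1 else 0) = x u - x w := by
  simp only [dotProduct, mul_sub, mul_ite, mul_one, mul_zero, sum_sub_distrib, sum_ite_eq',
    mem_univ, if_true]

theorem incidenceMatrix_mulVec_apply (head tail : E → V) (x : V → ℝ) (e : E) :
    (incidenceMatrix head tail *ᵥ x) e = x (head e) - x (tail e) := by
  rw [mulVec, dotProduct_comm]
  exact dotProduct_single_sub_single x (head e) (tail e)

end

variable [Fintype E] [DecidableEq E]

noncomputable def laplacian (head tail : E → V) (r : E → ℝ) : Matrix V V ℝ :=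
  (incidenceMatrix head tail)ᵀ * diagonal (fun e => (r e)⁻¹) * incidenceMatrix head tail

theorem laplacian_transpose (head tail : E → V) (r : E → ℝ) :
    (laplacian head tail r)ᵀ = laplacian head tail r := by
  rw [laplacian, transpose_mul, transpose_mul, diagonal_transpose, transpose_transpose,
    Matrix.mul_assoc]

theorem dotProduct_laplacian_mulVec [Fintype V] (head tail : E → V) (r : E → ℝ) (x y : V → ℝ) :
    x ⬝ᵥ (laplacian head tail r *ᵥ y) =
      ∑ e, (x (head e) - x (tail e)) * (y (head e) - y (tail e)) / r e := by
  rw [laplacian, ← mulVec_mulVec, ← mulVec_mulVec, dotProduct_mulVec, vecMul_transpose]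
  simp only [dotProduct, mulVec_diagonal, incidenceMatrix_mulVec_apply]
  exact sum_congr rfl fun e _ => by ring

theorem abs_sub_div_le_superlevelIndicator_dotProduct_laplacian_mulVec [Fintype V]
    (head tail : E → V) {r : E → ℝ} (hr : ∀ e, 0 < r e) (φ : V → ℝ) (e₀ : E) :
    |φ (head e₀) - φ (tail e₀)| / r e₀ ≤
      superlevelIndicator φ (max (φ (head e₀)) (φ (tail e₀))) ⬝ᵥ
        (laplacian head tail r *ᵥ φ) := by
  set x := superlevelIndicator φ (max (φ (head e₀)) (φ (tail e₀)))
  rw [dotProduct_laplacian_mulVec, ← superlevelIndicator_max_sub_mul_sub]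
  refine single_le_sum (f := fun e => (x (head e) - x (tail e)) * (φ (head e) - φ (tail e)) / r e)
    (fun e _ => ?_) (mem_univ e₀)
  exact div_nonneg (superlevelIndicator_sub_mul_sub_nonneg _ _ _ _) (hr e).le

end ElectricalNetwork

theorem unit_flow_le_one_general {V E : Type*} [Fintype V] [Fintype E] [DecidableEq V]
    [DecidableEq E]
    (head tail : E → V) (s t : V)
    (r : E → ℝ) (hr : ∀ e, 0 < r e)
    (B : Matrix E V ℝ)
    (hB : ∀ e v, B e v = (if v = head e then (1 : ℝ) else 0) - (if v = tail e then 1 else 0))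
    (L : Matrix V V ℝ)
    (hL : L = Bᵀ * Matrix.diagonal (fun e => (r e)⁻¹) * B)
    (hconn : ∀ x : V → ℝ, L *ᵥ x = 0 → ∀ v w : V, x v = x w)
    (Ld : Matrix V V ℝ) (hLd : IsMoorePenrose L Ld)
    (χst : V → ℝ)
    (hχ : χst = fun v => (if v = t then (1 : ℝ) else 0) - (if v = s then 1 else 0))
    (f : E → ℝ)
    (hf : f = fun e => (r e)⁻¹ * (B *ᵥ (Ld *ᵥ χst)) e) :
    ∀ e : E, |f e| ≤ 1 := by
  intro e₀
  obtain rfl : B = incidenceMatrix head tail := Matrix.ext fun e v => hB e v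
  obtain rfl : L = laplacian head tail r := hL
  have hdotχ : ∀ x : V → ℝ, x ⬝ᵥ χst = x t - x s :=
    hχ ▸ fun x => dotProduct_single_sub_single x t s
  set φ := Ld *ᵥ χst
  have hLφ : laplacian head tail r *ᵥ φ = χst :=
    hLd.mulVec_mulVec_eq_self (laplacian_transpose head tail r) fun z hz => by
      rw [hdotχ, hconn z hz t s, sub_self]
  set x := superlevelIndicator φ (max (φ (head e₀)) (φ (tail e₀)))
  calc |f e₀| = |φ (head e₀) - φ (tail e₀)| / r e₀ := by
        simp only [hf, incidenceMatrix_mulVec_apply]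
        rw [abs_mul, abs_inv, abs_of_pos (hr e₀), inv_mul_eq_div]
    _ ≤ x ⬝ᵥ (laplacian head tail r *ᵥ φ) :=
        abs_sub_div_le_superlevelIndicator_dotProduct_laplacian_mulVec head tail hr φ e₀
    _ = x t - x s := by rw [hLφ, hdotχ]
    _ ≤ 1 := superlevelIndicator_sub_le_one φ _ t s

/-- every edge of the unit `s`-`t` electric flow carries at most one
unit of flow: `|f_e| ≤ 1`. -/
theorem unit_flow_le_one {V E : Type*} [Fintype V] [Fintype E] [DecidableEq V]
    [DecidableEq E] [Nonempty E]
    (head tail : E → V) (s t : V) (hst : s ≠ t)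
    (r : E → ℝ) (hr : ∀ e, 0 < r e)
    (B : Matrix E V ℝ)
    (hB : ∀ e v, B e v = (if v = head e then (1 : ℝ) else 0) - (if v = tail e then 1 else 0))
    (L : Matrix V V ℝ)
    (hL : L = Bᵀ * Matrix.diagonal (fun e => (r e)⁻¹) * B)
    (hconn : ∀ x : V → ℝ, L *ᵥ x = 0 → ∀ v w : V, x v = x w)
    (Ld : Matrix V V ℝ) (hLd : IsMoorePenrose L Ld)
    (χst : V → ℝ)
    (hχ : χst = fun v => (if v = t then (1 : ℝ) else 0) - (if v = s then 1 else 0))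
    (f : E → ℝ)
    (hf : f = fun e => (r e)⁻¹ * (B *ᵥ (Ld *ᵥ χst)) e) :
    ∀ e : E, |f e| ≤ 1 :=
  unit_flow_le_one_general head tail s t r hr B hB L hL hconn Ld hLd χst hχ f hf
end

section
/- Suppose G is preconditioned and μ ∈ (0, F*]. Then the central path flow f(μ) satisfies u(f(μ))_e ≥ μ/(14m) for every preconditioning edge e. Consequently, r(f(μ))_e ≤ 400 m²/μ² for every preconditioning edge e, and in the graph with resistances r(f(μ)) the energy of a unit s-t electric flow is at most 400 m/μ², i.e. χ_{st}ᵀ L(f(μ))† χ_{st} ≤ 400 m/μ². -/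
open Matrix

/-- Resistances induced by a flow: `r(f)_e = u⁺(f)_e⁻² + u⁻(f)_e⁻²`. -/
noncomputable def resist {E : Type*} (u f : E → ℝ) (e : E) : ℝ :=
  ((u e - f e) ^ 2)⁻¹ + ((u e + f e) ^ 2)⁻¹

/-- KKT characterization of the central path flow with parameter `μ`: a strictly
feasible flow routing `F* − μ` units from `s` to `t` admitting dual potentials. -/
def IsCentralFlow {V E : Type*} [Fintype V] [Fintype E]
    (B : Matrix E V ℝ) (u : E → ℝ) (χst : V → ℝ) (Fstar μ : ℝ) (f : E → ℝ) : Prop :=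
  (∀ e, |f e| < u e) ∧ Bᵀ *ᵥ f = (Fstar - μ) • χst ∧
    ∃ φ : V → ℝ, ∀ e, (B *ᵥ φ) e = (u e - f e)⁻¹ - (u e + f e)⁻¹

/-- `G` is preconditioned with parameter `U` and set of preconditioning edges `P`:
each edge in `P` joins `s` and `t` and has capacity `2U`, every other edge has capacity
at most `U`, and at least half of all edges lie in `P`. -/
def Preconditioned {V E : Type*} [Fintype E] (head tail : E → V) (s t : V)
    (u : E → ℝ) (U : ℝ) (P : Finset E) : Prop :=
  0 < U ∧
    (∀ e ∈ P, u e = 2 * U ∧ ((head e = s ∧ tail e = t) ∨ (head e = t ∧ tail e = s))) ∧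
    (∀ e ∉ P, u e ≤ U) ∧ Fintype.card E ≤ 2 * P.card

/-!
Weak duality for the barrier problem bounds the potential difference of the central flow:
`μ (φ t - φ s) ≤ m`, because every edge contributes at most `1` to `(f* - f(μ)) ⬝ᵥ B φ`.
All preconditioning edges join `s` and `t` and have the same capacity, so the optimality
conditions force them to carry one common flow `x` into `t`; a cut at `t` gives `x ≥ -U`.
Since the barrier derivative at `x` equals the potential difference, it is at most `m / μ`,
which keeps `x` at distance at least `μ / (2m)` from `±2U`. Finally, routing one unit evenly
over the preconditioning edges gives an `s`-`t` flow of energy at most `16 m / μ²`, and by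
Thomson's principle this bounds the effective resistance.
-/

namespace IsMoorePenrose

variable {n : Type*} [Fintype n] {M X Y : Matrix n n ℝ}

theorem transpose (h : IsMoorePenrose M X) : IsMoorePenrose Mᵀ Xᵀ := by
  obtain ⟨h₁, h₂, h₃, h₄⟩ := h
  refine ⟨?_, ?_, ?_, ?_⟩
  · simpa only [transpose_mul, Matrix.mul_assoc] using congrArg Matrix.transpose h₁
  · simpa only [transpose_mul, Matrix.mul_assoc] using congrArg Matrix.transpose h₂
  · rw [← transpose_mul, transpose_transpose, h₄]
  · rw [← transpose_mul, transpose_transpose, h₃]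

theorem unique (hX : IsMoorePenrose M X) (hY : IsMoorePenrose M Y) : X = Y := by
  obtain ⟨hX₁, hX₂, hX₃, hX₄⟩ := hX
  obtain ⟨hY₁, hY₂, hY₃, hY₄⟩ := hY
  calc X = X * (M * X)ᵀ := by rw [hX₃, ← Matrix.mul_assoc, hX₂]
    _ = X * ((M * X)ᵀ * (M * Y)ᵀ) := by
      conv_lhs => rw [← hY₁]
      simp only [transpose_mul, Matrix.mul_assoc]
    _ = X * M * Y := by simp only [hX₃, hY₃, ← Matrix.mul_assoc, hX₂]
    _ = (X * M)ᵀ * (Y * M)ᵀ * Y := by rw [hX₄, hY₄, Matrix.mul_assoc (X * M), hY₂]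
    _ = Y := by
      rw [← transpose_mul, Matrix.mul_assoc Y M, ← Matrix.mul_assoc M X M, hX₁, hY₄, hY₂]

theorem isSymm (h : IsMoorePenrose M X) (hM : M.IsSymm) : X.IsSymm :=
  unique (hM.eq ▸ h.transpose) h

end IsMoorePenrose

theorem dotProduct_transpose_mul_diagonal_mul_mulVec {V E : Type*} [Fintype V] [Fintype E]
    [DecidableEq E] (B : Matrix E V ℝ) (w : E → ℝ) (x : V → ℝ) :
    x ⬝ᵥ ((Bᵀ * diagonal w * B) *ᵥ x) = ∑ e, w e * (B *ᵥ x) e ^ 2 := by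
  rw [Matrix.mul_assoc, ← mulVec_mulVec, dotProduct_mulVec, vecMul_transpose, ← mulVec_mulVec]
  exact Finset.sum_congr rfl fun e _ => by rw [mulVec_diagonal]; ring

/-- Thomson's principle (one direction): the effective resistance `χ ⬝ᵥ L† χ` is at most the
energy of any flow `g` with demands `χ = Bᵀ g`. -/
theorem IsMoorePenrose.dotProduct_mulVec_le_energy {V E : Type*} [Fintype V] [Fintype E]
    [DecidableEq E] (B : Matrix E V ℝ) {r : E → ℝ} (hr : ∀ e, 0 < r e) {Ld : Matrix V V ℝ}
    (hLd : IsMoorePenrose (Bᵀ * diagonal (fun e => (r e)⁻¹) * B) Ld) (g : E → ℝ) :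
    (Bᵀ *ᵥ g) ⬝ᵥ (Ld *ᵥ (Bᵀ *ᵥ g)) ≤ ∑ e, r e * g e ^ 2 := by
  set L := Bᵀ * diagonal (fun e => (r e)⁻¹) * B
  set y := Ld *ᵥ (Bᵀ *ᵥ g)
  have hLd_symm : Ldᵀ = Ld := hLd.isSymm <| by
    simp only [L, IsSymm, transpose_mul, transpose_transpose, diagonal_transpose,
      Matrix.mul_assoc]
  have h_quad : (Bᵀ *ᵥ g) ⬝ᵥ y = ∑ e, (r e)⁻¹ * (B *ᵥ y) e ^ 2 := by
    rw [← dotProduct_transpose_mul_diagonal_mul_mulVec]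
    conv_lhs => rw [show y = (Ld * L * Ld) *ᵥ (Bᵀ *ᵥ g) by rw [hLd.2.1]]
    rw [← mulVec_mulVec, ← mulVec_mulVec, dotProduct_mulVec, ← mulVec_transpose, hLd_symm]
  have h_flow : (Bᵀ *ᵥ g) ⬝ᵥ y = ∑ e, g e * (B *ᵥ y) e := by
    rw [mulVec_transpose, ← dotProduct_mulVec]
    rfl
  have h_cs : ((Bᵀ *ᵥ g) ⬝ᵥ y) ^ 2 ≤ (∑ e, r e * g e ^ 2) * ((Bᵀ *ᵥ g) ⬝ᵥ y) := by
    conv_lhs => rw [h_flow]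
    conv_rhs => rw [h_quad]
    refine Finset.sum_sq_le_sum_mul_sum_of_sq_le_mul _ (fun e _ => ?_) (fun e _ => ?_)
      (fun e _ => le_of_eq ?_)
    · exact mul_nonneg (hr e).le (sq_nonneg _)
    · exact mul_nonneg (inv_nonneg.mpr (hr e).le) (sq_nonneg _)
    · field_simp [(hr e).ne']
  have h_nonneg : 0 ≤ (Bᵀ *ᵥ g) ⬝ᵥ y := h_quad ▸ Finset.sum_nonneg fun e _ =>
    mul_nonneg (inv_nonneg.mpr (hr e).le) (sq_nonneg _)
  rcases h_nonneg.eq_or_lt with h_zero | h_pos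
  · exact h_zero ▸ Finset.sum_nonneg fun e _ => mul_nonneg (hr e).le (sq_nonneg _)
  · exact le_of_mul_le_mul_right (by nlinarith) h_pos

/-- The derivative of the logarithmic barrier `x ↦ -log (a - x) - log (a + x)` of `[-a, a]`. -/
noncomputable def logBarrierDeriv (a x : ℝ) : ℝ :=
  (a - x)⁻¹ - (a + x)⁻¹

theorem logBarrierDeriv_neg (a x : ℝ) : logBarrierDeriv a (-x) = -logBarrierDeriv a x := by
  simp only [logBarrierDeriv, sub_neg_eq_add, ← sub_eq_add_neg]
  ring

theorem strictMonoOn_logBarrierDeriv (a : ℝ) :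
    StrictMonoOn (logBarrierDeriv a) (Set.Ioo (-a) a) := by
  intro x ⟨hxa, hxa'⟩ y ⟨hya, hya'⟩ hxy
  have h₁ : (a - x)⁻¹ < (a - y)⁻¹ := by gcongr
  have h₂ : (a + y)⁻¹ < (a + x)⁻¹ := by gcongr; linarith
  simp only [logBarrierDeriv]
  linarith

theorem sub_mul_logBarrierDeriv_le_one {a x y : ℝ} (hx : |x| < a) (hy : |y| ≤ a) :
    (y - x) * logBarrierDeriv a x ≤ 1 := by
  rw [abs_lt] at hx
  rw [abs_le] at hy
  have hp : 0 < a - x := by linarith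
  have hq : 0 < a + x := by linarith
  rw [logBarrierDeriv, inv_sub_inv hp.ne' hq.ne', mul_div_assoc', div_le_one (by positivity)]
  rcases le_total (a - x) (a + x) with h | h <;> nlinarith

theorem le_sub_abs_of_logBarrierDeriv_le {U c x : ℝ} (hc : 0 < c) (hcU : c ≤ U) (hx : -U ≤ x)
    (hx' : x < 2 * U) (h : logBarrierDeriv (2 * U) x ≤ (2 * c)⁻¹) : c ≤ 2 * U - |x| := by
  rcases le_or_gt x U with hxU | hxU
  · linarith [abs_le.mpr ⟨hx, hxU⟩]
  have hp : 0 < 2 * U - x := by linarith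
  have hq : 0 < 2 * U + x := by linarith
  rw [logBarrierDeriv, inv_sub_inv hp.ne' hq.ne', div_le_iff₀ (by positivity)] at h
  have h_four : 4 * c * x ≤ (2 * U - x) * (2 * U + x) := by
    field_simp at h
    linarith
  rw [abs_of_pos (by linarith)]
  nlinarith

theorem resist_pos {E : Type*} {u f : E → ℝ} {e : E} (h : |f e| < u e) : 0 < resist u f e := by
  rw [abs_lt] at h
  have hp : 0 < u e - f e := by linarith
  have hq : 0 < u e + f e := by linarith
  unfold resist
  positivity

theorem resist_le_of_le_min {E : Type*} {u f : E → ℝ} {e : E} {c : ℝ} (hc : 0 < c)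
    (h : c ≤ min (u e - f e) (u e + f e)) : resist u f e ≤ 2 / c ^ 2 := by
  rw [le_min_iff] at h
  have h₁ : ((u e - f e) ^ 2)⁻¹ ≤ (c ^ 2)⁻¹ := by gcongr; exact h.1
  have h₂ : ((u e + f e) ^ 2)⁻¹ ≤ (c ^ 2)⁻¹ := by gcongr; exact h.2
  rw [resist, div_eq_mul_inv]
  linarith

theorem min_sub_add_eq_sub_abs (a b : ℝ) : min (a - b) (a + b) = a - |b| := by
  rw [← sub_neg_eq_add, min_sub_sub_left, ← abs_eq_max_neg]

section Incidence

variable {V E : Type*} [DecidableEq V] {head tail : E → V} {s t : V}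

variable (head tail) in
def incidence : Matrix E V ℝ :=
  Matrix.of fun e v => (if v = head e then 1 else 0) - (if v = tail e then 1 else 0)

variable (s t) in
def stVector : V → ℝ :=
  fun v => (if v = t then 1 else 0) - (if v = s then 1 else 0)

theorem incidence_mulVec_apply [Fintype V] (φ : V → ℝ) (e : E) :
    (incidence head tail *ᵥ φ) e = φ (head e) - φ (tail e) := by
  simp [incidence, mulVec, dotProduct, sub_mul, Finset.sum_sub_distrib, ite_mul]

theorem transpose_incidence_mulVec_apply [Fintype E] (f : E → ℝ) (v : V) :
    ((incidence head tail)ᵀ *ᵥ f) v = ∑ e, incidence head tail e v * f e := by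
  simp only [mulVec_transpose, vecMul, dotProduct, mul_comm]

theorem abs_incidence_apply_mul_le (e : E) (v : V) (y : ℝ) :
    |incidence head tail e v * y| ≤ |y| := by
  rw [abs_mul]
  refine mul_le_of_le_one_left (abs_nonneg _) ?_
  simp only [incidence, of_apply]
  split_ifs <;> norm_num

theorem stVector_dotProduct [Fintype V] (φ : V → ℝ) : stVector s t ⬝ᵥ φ = φ t - φ s := by
  simp [stVector, dotProduct, sub_mul, Finset.sum_sub_distrib, ite_mul]

theorem stVector_apply_right (hst : s ≠ t) : stVector s t t = 1 := by
  simp [stVector, hst.symm]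

theorem incidence_apply_right_eq_one_or_neg_one (hst : s ≠ t) {e : E}
    (he : (head e = s ∧ tail e = t) ∨ (head e = t ∧ tail e = s)) :
    incidence head tail e t = 1 ∨ incidence head tail e t = -1 := by
  rcases he with ⟨hs, ht⟩ | ⟨hs, ht⟩ <;> simp [incidence, hs, ht, hst.symm]

theorem incidence_apply_mul_incidence_apply_right (hst : s ≠ t) {e : E}
    (he : (head e = s ∧ tail e = t) ∨ (head e = t ∧ tail e = s)) (v : V) :
    incidence head tail e v * incidence head tail e t = stVector s t v := by
  rcases he with ⟨hs, ht⟩ | ⟨hs, ht⟩ <;>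
    by_cases hvs : v = s <;> by_cases hvt : v = t <;>
    simp_all [incidence, stVector, hst.symm]

theorem incidence_apply_right_mul_mulVec_apply [Fintype V] (hst : s ≠ t) {e : E}
    (he : (head e = s ∧ tail e = t) ∨ (head e = t ∧ tail e = s)) (φ : V → ℝ) :
    incidence head tail e t * (incidence head tail *ᵥ φ) e = φ t - φ s := by
  rw [incidence_mulVec_apply]
  rcases he with ⟨hs, ht⟩ | ⟨hs, ht⟩ <;> simp [incidence, hs, ht, hst.symm]

theorem flow_value_eq_sum [Fintype E] (hst : s ≠ t) {f : E → ℝ} {F : ℝ}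
    (hf : (incidence head tail)ᵀ *ᵥ f = F • stVector s t) :
    F = ∑ e, incidence head tail e t * f e := by
  rw [← transpose_incidence_mulVec_apply, hf, Pi.smul_apply, stVector_apply_right hst,
    smul_eq_mul, mul_one]

theorem flow_value_le_sum_abs [Fintype E] (hst : s ≠ t) {f : E → ℝ} {F : ℝ}
    (hf : (incidence head tail)ᵀ *ᵥ f = F • stVector s t) : F ≤ ∑ e, |f e| := by
  rw [flow_value_eq_sum hst hf]
  exact Finset.sum_le_sum fun e _ => (le_abs_self _).trans (abs_incidence_apply_mul_le e t _)

end Incidence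

section EvenSplitFlow

variable {V E : Type*} [Fintype E] [DecidableEq V] [DecidableEq E] {head tail : E → V}
  {s t : V} {P : Finset E}

variable (head tail t P) in
noncomputable def evenSplitFlow : E → ℝ :=
  fun e => if e ∈ P then incidence head tail e t / P.card else 0

theorem transpose_incidence_mulVec_evenSplitFlow (hst : s ≠ t)
    (hP : ∀ e ∈ P, (head e = s ∧ tail e = t) ∨ (head e = t ∧ tail e = s)) (hne : P.Nonempty) :
    (incidence head tail)ᵀ *ᵥ evenSplitFlow head tail t P = stVector s t := by
  funext v
  have hk : (P.card : ℝ) ≠ 0 := by exact_mod_cast hne.card_pos.ne'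
  rw [transpose_incidence_mulVec_apply]
  simp only [evenSplitFlow, mul_ite, mul_zero, Finset.sum_ite_mem, Finset.univ_inter,
    ← mul_div_assoc]
  rw [Finset.sum_congr rfl fun e he => by
      rw [incidence_apply_mul_incidence_apply_right hst (hP e he)],
    Finset.sum_const, nsmul_eq_mul]
  field_simp

theorem sum_mul_evenSplitFlow_sq_le (hst : s ≠ t)
    (hP : ∀ e ∈ P, (head e = s ∧ tail e = t) ∨ (head e = t ∧ tail e = s)) {r : E → ℝ} {R : ℝ}
    (hr : ∀ e ∈ P, r e ≤ R) :
    ∑ e, r e * evenSplitFlow head tail t P e ^ 2 ≤ R / P.card := by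
  have h_sq : ∀ e ∈ P, incidence head tail e t ^ 2 = 1 := fun e he => by
    rw [sq, incidence_apply_mul_incidence_apply_right hst (hP e he), stVector_apply_right hst]
  simp only [evenSplitFlow, ite_pow, zero_pow two_ne_zero, mul_ite, mul_zero, Finset.sum_ite_mem,
    Finset.univ_inter, div_pow]
  calc ∑ e ∈ P, r e * (incidence head tail e t ^ 2 / (P.card : ℝ) ^ 2)
      ≤ ∑ _e ∈ P, R * (1 / (P.card : ℝ) ^ 2) :=
        Finset.sum_le_sum fun e he => by rw [h_sq e he]; gcongr; exact hr e he
    _ = R / P.card := by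
        rw [Finset.sum_const, nsmul_eq_mul]
        rcases P.eq_empty_or_nonempty with rfl | hne
        · simp
        · field_simp

end EvenSplitFlow

/-- Weak duality for the barrier problem. -/
theorem mul_dotProduct_le_card_of_logBarrierDeriv {V E : Type*} [Fintype V] [Fintype E]
    {B : Matrix E V ℝ} {u f f' : E → ℝ} {φ χ : V → ℝ} {μ : ℝ} (hf : ∀ e, |f e| < u e)
    (hφ : ∀ e, (B *ᵥ φ) e = logBarrierDeriv (u e) (f e)) (hf' : ∀ e, |f' e| ≤ u e)
    (hdemand : Bᵀ *ᵥ (f' - f) = μ • χ) :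
    μ * (χ ⬝ᵥ φ) ≤ Fintype.card E := by
  calc μ * (χ ⬝ᵥ φ) = ∑ e, (f' e - f e) * logBarrierDeriv (u e) (f e) := by
        simp only [← hφ, ← Pi.sub_apply f' f, ← dotProduct.eq_1, dotProduct_mulVec,
          ← mulVec_transpose, hdemand, smul_dotProduct, smul_eq_mul]
    _ ≤ ∑ _e : E, (1 : ℝ) :=
        Finset.sum_le_sum fun e _ => sub_mul_logBarrierDeriv_le_one (hf e) (hf' e)
    _ = Fintype.card E := by simp

section Preconditioned

variable {V E : Type*} [Fintype E] [DecidableEq V] {head tail : E → V} {s t : V} {u : E → ℝ}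
  {U : ℝ} {P : Finset E}

theorem value_le_card_mul_of_preconditioned (hst : s ≠ t)
    (hpre : Preconditioned head tail s t u U P) {f : E → ℝ} {F : ℝ} (hf : ∀ e, |f e| ≤ u e)
    (hflow : (incidence head tail)ᵀ *ᵥ f = F • stVector s t) :
    F ≤ Fintype.card E * (2 * U) := by
  obtain ⟨hU, hP, hPc, -⟩ := hpre
  have hu : ∀ e, u e ≤ 2 * U := fun e => by
    by_cases he : e ∈ P
    · exact (hP e he).1.le
    · linarith [hPc e he]
  calc F ≤ ∑ e, |f e| := flow_value_le_sum_abs hst hflow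
    _ ≤ ∑ _e : E, 2 * U := Finset.sum_le_sum fun e _ => (hf e).trans (hu e)
    _ = Fintype.card E * (2 * U) := by simp

/-- Cut at `t`: at most `m - |P| ≤ |P|` edges lie outside `P`, each carrying less than `U`. -/
theorem neg_le_flow_of_preconditioned (hst : s ≠ t) (hpre : Preconditioned head tail s t u U P)
    {f : E → ℝ} {F : ℝ} (hF : 0 ≤ F) (hf : ∀ e, |f e| < u e)
    (hflow : (incidence head tail)ᵀ *ᵥ f = F • stVector s t)
    (hconst : ∀ e ∈ P, ∀ e' ∈ P,
      incidence head tail e t * f e = incidence head tail e' t * f e')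
    {e : E} (he : e ∈ P) : -U ≤ incidence head tail e t * f e := by
  classical
  obtain ⟨hU, -, hPc, hcard⟩ := hpre
  have h_in : ∑ e' ∈ P, incidence head tail e' t * f e' =
      P.card * (incidence head tail e t * f e) := by
    rw [Finset.sum_congr rfl fun e' he' => hconst e' he' e he, Finset.sum_const, nsmul_eq_mul]
  have h_out : ∑ e' ∈ Pᶜ, incidence head tail e' t * f e' ≤ Pᶜ.card * U := by
    rw [← nsmul_eq_mul]
    refine Finset.sum_le_card_nsmul _ _ _ fun e' he' => ?_
    have := hPc e' (Finset.mem_compl.mp he')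
    linarith [le_abs_self (incidence head tail e' t * f e'), hf e',
      abs_incidence_apply_mul_le (head := head) (tail := tail) e' t (f e')]
  have h_card : (Pᶜ.card : ℝ) = Fintype.card E - P.card := by
    rw [Finset.card_compl, Nat.cast_sub (Finset.card_le_univ P)]
  have h_card' : (Fintype.card E : ℝ) ≤ 2 * P.card := by exact_mod_cast hcard
  have h_pos : (0 : ℝ) < P.card := by exact_mod_cast Finset.card_pos.mpr ⟨e, he⟩
  have h_value := flow_value_eq_sum hst hflow
  rw [← Finset.sum_add_sum_compl P, h_in] at h_value
  by_contra! h_lt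
  nlinarith [mul_lt_mul_of_pos_left h_lt h_pos]

theorem le_min_residual_of_preconditioned [Fintype V] (hst : s ≠ t)
    (hpre : Preconditioned head tail s t u U P) {Fstar μ : ℝ} (hμ : 0 < μ) (hμF : μ ≤ Fstar)
    {f f' : E → ℝ} (hcentral : IsCentralFlow (incidence head tail) u (stVector s t) Fstar μ f)
    (hf' : ∀ e, |f' e| ≤ u e) (hflow' : (incidence head tail)ᵀ *ᵥ f' = Fstar • stVector s t) :
    ∀ e ∈ P, μ / (2 * Fintype.card E) ≤ min (u e - f e) (u e + f e) := by
  obtain ⟨hf, hflow, φ, hφ⟩ := hcentral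
  replace hφ : ∀ e, (incidence head tail *ᵥ φ) e = logBarrierDeriv (u e) (f e) := hφ
  have hP := hpre.2.1
  set x : E → ℝ := fun e => incidence head tail e t * f e
  have h_abs : ∀ e ∈ P, |x e| = |f e| := fun e he => by
    rcases incidence_apply_right_eq_one_or_neg_one hst (hP e he).2 with h | h <;> simp [x, h]
  have h_deriv : ∀ e ∈ P, logBarrierDeriv (2 * U) (x e) = φ t - φ s := fun e he => by
    rw [← incidence_apply_right_mul_mulVec_apply hst (hP e he).2 φ, hφ, ← (hP e he).1]
    rcases incidence_apply_right_eq_one_or_neg_one hst (hP e he).2 with h | h <;>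
      simp only [x, h, one_mul, neg_one_mul, logBarrierDeriv_neg]
  have h_mem : ∀ e ∈ P, x e ∈ Set.Ioo (-(2 * U)) (2 * U) := fun e he =>
    abs_lt.mp ((h_abs e he).trans_lt ((hP e he).1 ▸ hf e))
  have h_const : ∀ e ∈ P, ∀ e' ∈ P, x e = x e' := fun e he e' he' =>
    (strictMonoOn_logBarrierDeriv _).injOn (h_mem e he) (h_mem e' he')
      ((h_deriv e he).trans (h_deriv e' he').symm)
  have h_gap : μ * (φ t - φ s) ≤ Fintype.card E := by
    rw [← stVector_dotProduct]
    refine mul_dotProduct_le_card_of_logBarrierDeriv hf hφ hf' ?_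
    rw [mulVec_sub, hflow', hflow, ← sub_smul, sub_sub_cancel]
  have h_value := value_le_card_mul_of_preconditioned hst hpre hf' hflow'
  intro e he
  have hm : (0 : ℝ) < Fintype.card E := Nat.cast_pos.mpr (Fintype.card_pos_iff.mpr ⟨e⟩)
  rw [min_sub_add_eq_sub_abs, ← h_abs e he, (hP e he).1]
  refine le_sub_abs_of_logBarrierDeriv_le (by positivity) ?_
    (neg_le_flow_of_preconditioned hst hpre (sub_nonneg.2 hμF) hf hflow h_const he)
    (h_mem e he).2 ?_
  · rw [div_le_iff₀ (by positivity)]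
    linarith
  · rw [h_deriv e he, show (2 * (μ / (2 * Fintype.card E)))⁻¹ = Fintype.card E / μ by
      field_simp, le_div_iff₀ hμ]
    linarith

end Preconditioned

theorem precondition_energy_bound_general {V E : Type*} [Fintype V] [Fintype E] [DecidableEq V]
    [DecidableEq E]
    (head tail : E → V) (s t : V) (hst : s ≠ t)
    (u : E → ℝ)
    (B : Matrix E V ℝ)
    (hB : ∀ e v, B e v = (if v = head e then (1 : ℝ) else 0) - (if v = tail e then 1 else 0))
    (χst : V → ℝ)
    (hχ : χst = fun v => (if v = t then (1 : ℝ) else 0) - (if v = s then 1 else 0))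
    (Fstar : ℝ)
    (hFstar : IsGreatest
      {F : ℝ | ∃ f : E → ℝ, (∀ e, |f e| ≤ u e) ∧ Bᵀ *ᵥ f = F • χst} Fstar)
    (U : ℝ) (P : Finset E) (hpre : Preconditioned head tail s t u U P)
    (μ : ℝ) (hμ0 : 0 < μ) (hμF : μ ≤ Fstar)
    (fμ : E → ℝ) (hfμ : IsCentralFlow B u χst Fstar μ fμ)
    (Ld : Matrix V V ℝ)
    (hLd : IsMoorePenrose (Bᵀ * Matrix.diagonal (fun e => (resist u fμ e)⁻¹) * B) Ld) :
    (∀ e ∈ P, μ / (14 * (Fintype.card E : ℝ)) ≤ min (u e - fμ e) (u e + fμ e)) ∧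
      (∀ e ∈ P, resist u fμ e ≤ 400 * (Fintype.card E : ℝ) ^ 2 / μ ^ 2) ∧
      χst ⬝ᵥ (Ld *ᵥ χst) ≤ 400 * (Fintype.card E : ℝ) / μ ^ 2 := by
  obtain rfl : B = incidence head tail := Matrix.ext hB
  obtain rfl : χst = stVector s t := hχ
  obtain ⟨f', hf', hflow'⟩ := hFstar.1
  have hjoin : ∀ e ∈ P, (head e = s ∧ tail e = t) ∨ (head e = t ∧ tail e = s) :=
    fun e he => (hpre.2.1 e he).2
  have hk : (Fintype.card E : ℝ) ≤ 2 * P.card := by exact_mod_cast hpre.2.2.2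
  set m : ℝ := (Fintype.card E : ℝ)
  have hm : 0 < m := by
    have := value_le_card_mul_of_preconditioned hst hpre hf' hflow'
    nlinarith [hpre.1]
  have h_residual := le_min_residual_of_preconditioned hst hpre hμ0 hμF hfμ hf' hflow'
  have h_resist : ∀ e ∈ P, resist u fμ e ≤ 8 * m ^ 2 / μ ^ 2 := fun e he =>
    (resist_le_of_le_min (by positivity) (h_residual e he)).trans_eq (by field_simp; ring)
  refine ⟨fun e he => le_trans ?_ (h_residual e he), fun e he => (h_resist e he).trans ?_, ?_⟩
  · gcongr; norm_num
  · gcongr; norm_num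
  have hne : P.Nonempty := by
    rw [← Finset.card_pos, ← Nat.cast_pos (α := ℝ)]
    linarith
  calc stVector s t ⬝ᵥ (Ld *ᵥ stVector s t)
      ≤ ∑ e, resist u fμ e * evenSplitFlow head tail t P e ^ 2 := by
        rw [← transpose_incidence_mulVec_evenSplitFlow hst hjoin hne]
        exact hLd.dotProduct_mulVec_le_energy _ (fun e => resist_pos (hfμ.1 e)) _
    _ ≤ 8 * m ^ 2 / μ ^ 2 / P.card :=
        sum_mul_evenSplitFlow_sq_le hst hjoin h_resist
    _ ≤ 400 * m / μ ^ 2 := by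
        rw [div_le_iff₀ (by positivity)]
        calc 8 * m ^ 2 / μ ^ 2 = 16 * m / μ ^ 2 * (m / 2) := by ring
          _ ≤ 400 * m / μ ^ 2 * P.card := by gcongr <;> linarith

/-- Lemma `precon`/`elecenergy`: on a preconditioned graph the central
flow keeps residual capacity at least `μ/(14m)` on every preconditioning edge, hence
resistance at most `400m²/μ²` there, and the energy of the unit `s`-`t` electric flow
with resistances `r(f(μ))` is at most `400m/μ²`. -/
theorem precondition_energy_bound {V E : Type*} [Fintype V] [Fintype E] [DecidableEq V]
    [DecidableEq E]
    (head tail : E → V) (s t : V) (hst : s ≠ t)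
    (u : E → ℝ) (hu : ∀ e, 0 < u e)
    (B : Matrix E V ℝ)
    (hB : ∀ e v, B e v = (if v = head e then (1 : ℝ) else 0) - (if v = tail e then 1 else 0))
    (χst : V → ℝ)
    (hχ : χst = fun v => (if v = t then (1 : ℝ) else 0) - (if v = s then 1 else 0))
    (hconn : ∀ x : V → ℝ, (∀ e, x (head e) = x (tail e)) → ∀ v w : V, x v = x w)
    (Fstar : ℝ)
    (hFstar : IsGreatest
      {F : ℝ | ∃ f : E → ℝ, (∀ e, |f e| ≤ u e) ∧ Bᵀ *ᵥ f = F • χst} Fstar)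
    (U : ℝ) (P : Finset E) (hpre : Preconditioned head tail s t u U P)
    (μ : ℝ) (hμ0 : 0 < μ) (hμF : μ ≤ Fstar)
    (fμ : E → ℝ) (hfμ : IsCentralFlow B u χst Fstar μ fμ)
    (Ld : Matrix V V ℝ)
    (hLd : IsMoorePenrose (Bᵀ * Matrix.diagonal (fun e => (resist u fμ e)⁻¹) * B) Ld) :
    (∀ e ∈ P, μ / (14 * (Fintype.card E : ℝ)) ≤ min (u e - fμ e) (u e + fμ e)) ∧
      (∀ e ∈ P, resist u fμ e ≤ 400 * (Fintype.card E : ℝ) ^ 2 / μ ^ 2) ∧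
      χst ⬝ᵥ (Ld *ᵥ χst) ≤ 400 * (Fintype.card E : ℝ) / μ ^ 2 :=
  precondition_energy_bound_general head tail s t hst u B hB χst hχ Fstar hFstar U P hpre μ hμ0 hμF
    fμ hfμ Ld hLd
end
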